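/- arXiv:1409.0570 — 4 statements merged into one kernel-verified Lean document; each statement's English description precedes it below -/
import Mathlib

section
/- The monic orthogonal polynomial vectors P_{[k]}(x) := Σ_{ℓ≤k} S_{[k],[ℓ]} χ_{[ℓ]}(x) obtained from the Cholesky factorization of the moment matrix satisfy the orthogonality relations ∫ P_{[k]}(x) dμ(x) P_{[ℓ]}(x)ᵀ = 0 for ℓ < k and ∫ P_{[k]}(x) dμ(x) P_{[k]}(x)ᵀ = H_{[k]}. -/
open MeasureTheory

namespace MVOPR12

/-- Total degree of a multi-index. -/
def deg {D : ℕ} (α : Fin D → ℕ) : ℕ := ∑ a, α a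

/-- The moment matrix `G_{α,β} = ∫ x^{α+β} dμ` of a measure on `ℝ^D`. -/
noncomputable def momG (D : ℕ) (μ : Measure (Fin D → ℝ)) :
    (Fin D → ℕ) → (Fin D → ℕ) → ℝ :=
  fun α β => ∫ x, ∏ a, x a ^ (α a + β a) ∂μ

/-- The multivariate orthogonal polynomials `P_α(x) = Σ_β S_{α,β} x^β`
obtained from the rows of the Cholesky factor `S` (a `finsum`, finitely
supported thanks to the triangularity of `S`). -/
noncomputable def mvP {D : ℕ} (S : (Fin D → ℕ) → (Fin D → ℕ) → ℝ)
    (α : Fin D → ℕ) (x : Fin D → ℝ) : ℝ :=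
  ∑ᶠ β, S α β * ∏ a, x a ^ β a

/-- Multi-indices of bounded total degree lie in a box. -/
lemma deg_mem {D : ℕ} {α : Fin D → ℕ} {n : ℕ} (h : deg α ≤ n) :
    α ∈ Fintype.piFinset (fun _ : Fin D => Finset.range (n + 1)) := by
  simp only [Fintype.mem_piFinset, Finset.mem_range]
  intro a
  have : α a ≤ deg α :=
    Finset.single_le_sum (f := α) (fun _ _ => Nat.zero_le _) (Finset.mem_univ a)
  omega

/-- The monic orthogonal polynomial vectors `P_{[k]}` satisfy, entrywise,
`∫ P_{[k]} dμ P_{[ℓ]}ᵀ = 0` for `ℓ < k` and `∫ P_{[k]} dμ P_{[k]}ᵀ = H_{[k]}`. -/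

theorem mvopr_orthogonality
    (D : ℕ) (μ : Measure (Fin D → ℝ))
    (hint : ∀ α : Fin D → ℕ, Integrable (fun x => ∏ a, x a ^ α a) μ)
    (S H : (Fin D → ℕ) → (Fin D → ℕ) → ℝ)
    (hS1 : ∀ α β, deg α < deg β → S α β = 0)
    (hS2 : ∀ α β, deg α = deg β → S α β = if α = β then 1 else 0)
    (hH : ∀ α β, deg α ≠ deg β → H α β = 0)
    (hfact : ∀ α β,
      (∑ᶠ γ, ∑ᶠ δ, S α γ * momG D μ γ δ * S β δ) = H α β) :
    (∀ α β : Fin D → ℕ, deg β < deg α →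
      ∫ x, mvP S α x * mvP S β x ∂μ = 0) ∧
    (∀ α β : Fin D → ℕ, deg α = deg β →
      ∫ x, mvP S α x * mvP S β x ∂μ = H α β) := by
  have hsuppS : ∀ (τ γ : Fin D → ℕ), S τ γ ≠ 0 → deg γ ≤ deg τ := by
    intro τ γ h
    by_contra hc
    exact h (hS1 τ γ (by omega))
  have key : ∀ α β : Fin D → ℕ, ∫ x, mvP S α x * mvP S β x ∂μ = H α β := by
    intro α β
    rw [← hfact α β]
    set Tα := Fintype.piFinset (fun _ : Fin D => Finset.range (deg α + 1)) with hTα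
    set Tβ := Fintype.piFinset (fun _ : Fin D => Finset.range (deg β + 1)) with hTβ
    have hmv : ∀ (τ : Fin D → ℕ) (n : ℕ), deg τ ≤ n → ∀ x : Fin D → ℝ,
        mvP S τ x = ∑ γ ∈ Fintype.piFinset (fun _ : Fin D => Finset.range (n + 1)),
          S τ γ * ∏ a, x a ^ γ a := by
      intro τ n hn x
      apply finsum_eq_finset_sum_of_support_subset
      intro γ hγ
      simp only [Function.mem_support] at hγ
      have hS : S τ γ ≠ 0 := fun h => hγ (by simp [h])
      exact deg_mem (le_trans (hsuppS τ γ hS) hn)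
    have heq : ∀ (γ δ : Fin D → ℕ) (x : Fin D → ℝ),
        (S α γ * ∏ a, x a ^ γ a) * (S β δ * ∏ a, x a ^ δ a)
          = (S α γ * S β δ) * ∏ a, x a ^ (γ a + δ a) := by
      intro γ δ x
      rw [Finset.prod_congr rfl (fun a _ => pow_add (x a) (γ a) (δ a)),
        Finset.prod_mul_distrib]
      ring
    have hintg : ∀ γ δ : Fin D → ℕ,
        Integrable (fun x => (S α γ * ∏ a, x a ^ γ a) * (S β δ * ∏ a, x a ^ δ a)) μ := by
      intro γ δ
      have h1 := (hint (fun a => γ a + δ a)).const_mul (S α γ * S β δ)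
      refine h1.congr ?_
      filter_upwards with x
      exact (heq γ δ x).symm
    calc ∫ x, mvP S α x * mvP S β x ∂μ
        = ∫ x, ∑ γ ∈ Tα, ∑ δ ∈ Tβ,
            (S α γ * ∏ a, x a ^ γ a) * (S β δ * ∏ a, x a ^ δ a) ∂μ := by
          congr 1; funext x
          rw [hmv α (deg α) le_rfl x, hmv β (deg β) le_rfl x, Finset.sum_mul_sum]
      _ = ∑ γ ∈ Tα, ∑ δ ∈ Tβ,
            ∫ x, (S α γ * ∏ a, x a ^ γ a) * (S β δ * ∏ a, x a ^ δ a) ∂μ := by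
          rw [MeasureTheory.integral_finset_sum _
            (fun γ _ => MeasureTheory.integrable_finset_sum _ (fun δ _ => hintg γ δ))]
          exact Finset.sum_congr rfl fun γ _ =>
            MeasureTheory.integral_finset_sum _ (fun δ _ => hintg γ δ)
      _ = ∑ γ ∈ Tα, ∑ δ ∈ Tβ, S α γ * momG D μ γ δ * S β δ := by
          refine Finset.sum_congr rfl fun γ _ => Finset.sum_congr rfl fun δ _ => ?_
          simp_rw [heq γ δ]
          rw [MeasureTheory.integral_const_mul]
          unfold momG
          ring
      _ = ∑ᶠ γ, ∑ᶠ δ, S α γ * momG D μ γ δ * S β δ := by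
          have hin : ∀ γ, (∑ᶠ δ, S α γ * momG D μ γ δ * S β δ)
              = ∑ δ ∈ Tβ, S α γ * momG D μ γ δ * S β δ := by
            intro γ
            apply finsum_eq_finset_sum_of_support_subset
            intro δ hδ
            simp only [Function.mem_support] at hδ
            have hS : S β δ ≠ 0 := fun h => hδ (by simp [h])
            exact deg_mem (hsuppS β δ hS)
          rw [finsum_eq_finset_sum_of_support_subset
            (fun γ => ∑ᶠ δ, S α γ * momG D μ γ δ * S β δ) (s := Tα) ?_]
          · exact Finset.sum_congr rfl fun γ _ => (hin γ).symm
          · intro γ hγ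
            simp only [Function.mem_support] at hγ
            have hS : S α γ ≠ 0 := by
              intro h
              apply hγ
              simp [h]
            exact deg_mem (hsuppS α γ hS)
  constructor
  · intro α β h
    rw [key α β]
    exact hH α β (ne_of_gt h)
  · intro α β _
    exact key α β

end MVOPR12
end

section
/- The degree-ℓ multivariate orthogonal polynomial vector is the Schur complement of the bordered truncated moment matrix: P_{[ℓ]}(x) = χ_{[ℓ]}(x) − (G_{[ℓ],[0]} ⋯ G_{[ℓ],[ℓ−1]}) (G^{[ℓ]})⁻¹ (χ_{[0]}(x); …; χ_{[ℓ−1]}(x)). -/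
open MeasureTheory

namespace MVOPR13

/-- Total degree of a multi-index. -/
def deg {D : ℕ} (α : Fin D → ℕ) : ℕ := ∑ a, α a

/-- The (finite) set of multi-indices of total degree `< ℓ`. -/
def belowSet (D ℓ : ℕ) : Finset (Fin D → ℕ) :=
  (Finset.range ℓ).biUnion fun k => Finset.Nat.antidiagonalTuple D k

/-- The moment matrix `G_{α,β} = ∫ x^{α+β} dμ` of a measure on `ℝ^D`. -/
noncomputable def momG (D : ℕ) (μ : Measure (Fin D → ℝ)) :
    (Fin D → ℕ) → (Fin D → ℕ) → ℝ :=
  fun α β => ∫ x, ∏ a, x a ^ (α a + β a) ∂μ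

/-- The truncated moment matrix `G^{[ℓ]}`, on multi-indices of degree `< ℓ`. -/
noncomputable def momGTrunc (D ℓ : ℕ) (μ : Measure (Fin D → ℝ)) :
    Matrix (belowSet D ℓ) (belowSet D ℓ) ℝ :=
  Matrix.of fun i j => momG D μ i.1 j.1

/-- The orthogonal polynomials `P_α(x) = Σ_β S_{α,β} x^β`. -/
noncomputable def mvP {D : ℕ} (S : (Fin D → ℕ) → (Fin D → ℕ) → ℝ)
    (α : Fin D → ℕ) (x : Fin D → ℝ) : ℝ :=
  ∑ᶠ β, S α β * ∏ a, x a ^ β a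

lemma mem_belowSet {D ℓ : ℕ} {α : Fin D → ℕ} :
    α ∈ belowSet D ℓ ↔ deg α < ℓ := by
  constructor
  · intro h
    simp only [belowSet, Finset.mem_biUnion, Finset.mem_range,
      Finset.Nat.mem_antidiagonalTuple] at h
    obtain ⟨k, hk, hs⟩ := h
    simpa [deg, hs] using hk
  · intro h
    simp only [belowSet, Finset.mem_biUnion, Finset.mem_range,
      Finset.Nat.mem_antidiagonalTuple]
    exact ⟨deg α, h, rfl⟩

/-- The degree-`ℓ` multivariate orthogonal polynomial vector is the Schur
complement of the bordered truncated moment matrix: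
`P_{[ℓ]}(x) = χ_{[ℓ]}(x) - G_{[ℓ],<ℓ} (G^{[ℓ]})⁻¹ χ^{[ℓ]}(x)`, entrywise. -/
theorem mvopr_schur_complement_formula
    (D : ℕ) (μ : Measure (Fin D → ℝ))
    (hint : ∀ α : Fin D → ℕ, Integrable (fun x => ∏ a, x a ^ α a) μ)
    (S H : (Fin D → ℕ) → (Fin D → ℕ) → ℝ)
    (hS1 : ∀ α β, deg α < deg β → S α β = 0)
    (hS2 : ∀ α β, deg α = deg β → S α β = if α = β then 1 else 0)
    (hH : ∀ α β, deg α ≠ deg β → H α β = 0)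
    (hfact : ∀ α β,
      (∑ᶠ γ, ∑ᶠ δ, S α γ * momG D μ γ δ * S β δ) = H α β)
    (ℓ : ℕ) (hdet : IsUnit (momGTrunc D ℓ μ).det) :
    ∀ α : Fin D → ℕ, deg α = ℓ → ∀ x : Fin D → ℝ,
      mvP S α x =
        (∏ a, x a ^ α a) -
          ∑ i : belowSet D ℓ, ∑ j : belowSet D ℓ,
            momG D μ α i.1 * (momGTrunc D ℓ μ)⁻¹ i j * ∏ a, x a ^ (j.1 a) := by
  classical
  intro α hα x
  set G := momG D μ with hGdef
  have hS0 : ∀ β γ, S β γ ≠ 0 → deg γ ≤ deg β := fun β γ h =>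
    not_lt.mp fun hl => h (hS1 β γ hl)
  -- convert the finsum factorization into finite sums
  have hfin : ∀ β β' : Fin D → ℕ,
      ∑ γ ∈ belowSet D (deg β + 1), ∑ δ ∈ belowSet D (deg β' + 1),
        S β γ * G γ δ * S β' δ = H β β' := by
    intro β β'
    rw [← hfact β β']
    have inner : ∀ γ, (∑ᶠ δ, S β γ * G γ δ * S β' δ)
        = ∑ δ ∈ belowSet D (deg β' + 1), S β γ * G γ δ * S β' δ := by
      intro γ
      apply finsum_eq_finset_sum_of_support_subset
      intro δ hδ
      simp only [Function.mem_support] at hδ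
      have hne : S β' δ ≠ 0 := fun h => hδ (by simp [h])
      exact mem_belowSet.mpr (Nat.lt_succ_of_le (hS0 _ _ hne))
    rw [finsum_congr inner]
    symm
    apply finsum_eq_finset_sum_of_support_subset
    intro γ hγ
    simp only [Function.mem_support] at hγ
    have hne : S β γ ≠ 0 := by
      intro h
      exact hγ (by simp [h])
    exact mem_belowSet.mpr (Nat.lt_succ_of_le (hS0 _ _ hne))
  -- splitting off the top-degree term
  have hsplit : ∀ (β : Fin D → ℕ) (f : (Fin D → ℕ) → ℝ),
      ∑ γ ∈ belowSet D (deg β + 1), S β γ * f γ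
        = f β + ∑ γ ∈ belowSet D (deg β), S β γ * f γ := by
    intro β f
    have hsub : insert β (belowSet D (deg β)) ⊆ belowSet D (deg β + 1) := by
      intro γ hγ
      rcases Finset.mem_insert.mp hγ with rfl | h
      · exact mem_belowSet.mpr (Nat.lt_succ_self _)
      · exact mem_belowSet.mpr (Nat.lt_succ_of_lt (mem_belowSet.mp h))
    rw [← Finset.sum_subset hsub ?_]
    · rw [Finset.sum_insert (by simp [mem_belowSet]), hS2 β β rfl, if_pos rfl,
        one_mul]
    · intro γ hγ hγ'
      have hle : deg γ ≤ deg β := Nat.lt_succ_iff.mp (mem_belowSet.mp hγ)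
      have hne : γ ≠ β := fun h => hγ' (by simp [h])
      have hnd : ¬ deg γ < deg β := fun h =>
        hγ' (Finset.mem_insert_of_mem (mem_belowSet.mpr h))
      have heq : deg β = deg γ := le_antisymm (not_lt.mp hnd) hle
      rw [hS2 β γ heq, if_neg (fun h => hne h.symm), zero_mul]
  -- the row of inner products
  set c : (Fin D → ℕ) → ℝ := fun δ => ∑ γ ∈ belowSet D (ℓ + 1), S α γ * G γ δ
    with hcdef
  have hE : belowSet D (deg α + 1) = belowSet D (ℓ + 1) := by rw [hα]
  have hkey : ∀ β : Fin D → ℕ, deg β < ℓ →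
      ∑ δ ∈ belowSet D (deg β + 1), S β δ * c δ = 0 := by
    intro β hβ
    have h0 := hfin α β
    rw [hE, hH α β (by omega)] at h0
    rw [Finset.sum_comm] at h0
    calc ∑ δ ∈ belowSet D (deg β + 1), S β δ * c δ
        = ∑ δ ∈ belowSet D (deg β + 1), ∑ γ ∈ belowSet D (ℓ + 1),
            S α γ * G γ δ * S β δ := by
          apply Finset.sum_congr rfl
          intro δ _
          rw [hcdef]
          simp only [Finset.sum_mul]
          rw [Finset.mul_sum]
          apply Finset.sum_congr rfl
          intro γ _
          ring
      _ = 0 := h0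
  have hczero : ∀ n : ℕ, ∀ β : Fin D → ℕ, deg β = n → deg β < ℓ → c β = 0 := by
    intro n
    induction n using Nat.strong_induction_on with
    | _ n ih =>
      intro β hn hβ
      have h0 := hkey β hβ
      rw [hsplit β c] at h0
      have hz : ∑ γ ∈ belowSet D (deg β), S β γ * c γ = 0 := by
        apply Finset.sum_eq_zero
        intro γ hγ
        have hlt : deg γ < deg β := mem_belowSet.mp hγ
        rw [ih (deg γ) (hn ▸ hlt) γ rfl (hlt.trans hβ), mul_zero]
      rw [hz, add_zero] at h0
      exact h0
  set Gt := momGTrunc D ℓ μ with hGt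
  have hrow : ∀ j : belowSet D ℓ,
      ∑ i : belowSet D ℓ, S α i.1 * Gt i j = - G α j.1 := by
    intro j
    have hc : c j.1 = 0 :=
      hczero (deg j.1) j.1 rfl (mem_belowSet.mp j.2)
    rw [hcdef] at hc
    simp only at hc
    have hsp := hsplit α (fun γ => G γ j.1)
    rw [hα] at hsp
    rw [hsp] at hc
    have : ∑ γ ∈ belowSet D ℓ, S α γ * G γ j.1
        = ∑ i : belowSet D ℓ, S α i.1 * Gt i j := by
      rw [← Finset.sum_coe_sort (belowSet D ℓ) (fun γ => S α γ * G γ j.1)]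
      rfl
    rw [this] at hc
    linarith
  have hmul : Gt * Gt⁻¹ = 1 := Matrix.mul_nonsing_inv Gt hdet
  have hval : ∀ j : belowSet D ℓ,
      S α j.1 = - ∑ i : belowSet D ℓ, G α i.1 * Gt⁻¹ i j := by
    intro j
    have h1 : S α j.1 = ∑ i : belowSet D ℓ, S α i.1 * (Gt * Gt⁻¹) i j := by
      rw [hmul]
      simp [Matrix.one_apply]
    rw [h1]
    simp only [Matrix.mul_apply]
    calc ∑ i : belowSet D ℓ, S α i.1 * ∑ b : belowSet D ℓ, Gt i b * Gt⁻¹ b j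
        = ∑ b : belowSet D ℓ, (∑ i : belowSet D ℓ, S α i.1 * Gt i b)
            * Gt⁻¹ b j := by
          simp_rw [Finset.mul_sum, Finset.sum_mul]
          rw [Finset.sum_comm]
          simp_rw [mul_assoc]
      _ = ∑ b : belowSet D ℓ, (- G α b.1) * Gt⁻¹ b j := by
          apply Finset.sum_congr rfl
          intro b _
          rw [hrow b]
      _ = - ∑ i : belowSet D ℓ, G α i.1 * Gt⁻¹ i j := by
          simp [neg_mul]
  -- compute mvP as a finite sum
  have hmvP : mvP S α x = (∏ a, x a ^ α a)
      + ∑ j : belowSet D ℓ, S α j.1 * ∏ a, x a ^ (j.1 a) := by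
    unfold mvP
    have hsupp : (Function.support fun β => S α β * ∏ a, x a ^ β a)
        ⊆ (insert α (belowSet D ℓ) : Finset (Fin D → ℕ)) := by
      intro β hβ
      simp only [Function.mem_support] at hβ
      have hne : S α β ≠ 0 := fun h => hβ (by simp [h])
      have hle : deg β ≤ ℓ := hα ▸ hS0 _ _ hne
      rcases lt_or_eq_of_le hle with h | h
      · exact Finset.mem_insert_of_mem (mem_belowSet.mpr h)
      · by_cases hb : β = α
        · simp [hb]
        · exfalso
          apply hne
          rw [hS2 α β (by rw [hα, h]), if_neg (fun hh => hb hh.symm)]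
    rw [finsum_eq_finset_sum_of_support_subset _ hsupp]
    rw [Finset.sum_insert (by simp [mem_belowSet, hα])]
    rw [hS2 α α rfl, if_pos rfl, one_mul]
    rw [← Finset.sum_coe_sort (belowSet D ℓ) (fun β => S α β * ∏ a, x a ^ β a)]
  rw [hmvP, sub_eq_add_neg]
  congr 1
  calc ∑ j : belowSet D ℓ, S α j.1 * ∏ a, x a ^ (j.1 a)
      = ∑ j : belowSet D ℓ, (- ∑ i : belowSet D ℓ, G α i.1 * Gt⁻¹ i j)
          * ∏ a, x a ^ (j.1 a) := by
        apply Finset.sum_congr rfl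
        intro j _
        rw [hval j]
    _ = - ∑ i : belowSet D ℓ, ∑ j : belowSet D ℓ,
          G α i.1 * Gt⁻¹ i j * ∏ a, x a ^ (j.1 a) := by
        simp only [neg_mul, Finset.sum_neg_distrib, Finset.sum_mul]
        congr 1
        rw [Finset.sum_comm]

end MVOPR13
end

section
/- The Christoffel–Darboux kernel admits the two equivalent expressions K^{(ℓ)}(x,y) = (χ^{[ℓ]}(x))ᵀ (G^{[ℓ]})⁻¹ χ^{[ℓ]}(y) = Σ_{k=0}^{ℓ−1} P_{[k]}(x)ᵀ (H_{[k]})⁻¹ P_{[k]}(y). -/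
open MeasureTheory

namespace MVOPR14

/-- Total degree of a multi-index. -/
def deg {D : ℕ} (α : Fin D → ℕ) : ℕ := ∑ a, α a

/-- The (finite) set of multi-indices of total degree `< ℓ`. -/
def belowSet (D ℓ : ℕ) : Finset (Fin D → ℕ) :=
  (Finset.range ℓ).biUnion fun k => Finset.Nat.antidiagonalTuple D k

/-- The moment matrix `G_{α,β} = ∫ x^{α+β} dμ` of a measure on `ℝ^D`. -/
noncomputable def momG (D : ℕ) (μ : Measure (Fin D → ℝ)) :
    (Fin D → ℕ) → (Fin D → ℕ) → ℝ :=
  fun α β => ∫ x, ∏ a, x a ^ (α a + β a) ∂μ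

/-- The truncated moment matrix `G^{[ℓ]}`, on multi-indices of degree `< ℓ`. -/
noncomputable def momGTrunc (D ℓ : ℕ) (μ : Measure (Fin D → ℝ)) :
    Matrix (belowSet D ℓ) (belowSet D ℓ) ℝ :=
  Matrix.of fun i j => momG D μ i.1 j.1

/-- The `k`-th diagonal block `H_{[k]}` of the block diagonal matrix `H`,
as a matrix on the multi-indices of total degree `k`. -/
def Hblock (D k : ℕ) (H : (Fin D → ℕ) → (Fin D → ℕ) → ℝ) :
    Matrix (Finset.Nat.antidiagonalTuple D k) (Finset.Nat.antidiagonalTuple D k) ℝ :=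
  Matrix.of fun i j => H i.1 j.1

/-- The orthogonal polynomials `P_α(x) = Σ_β S_{α,β} x^β`. -/
noncomputable def mvP {D : ℕ} (S : (Fin D → ℕ) → (Fin D → ℕ) → ℝ)
    (α : Fin D → ℕ) (x : Fin D → ℝ) : ℝ :=
  ∑ᶠ β, S α β * ∏ a, x a ^ β a

lemma mem_block {D k : ℕ} {α : Fin D → ℕ} :
    α ∈ Finset.Nat.antidiagonalTuple D k ↔ deg α = k :=
  Finset.Nat.mem_antidiagonalTuple

lemma mem_belowSet {D ℓ : ℕ} {α : Fin D → ℕ} :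
    α ∈ belowSet D ℓ ↔ deg α < ℓ := by
  simp only [belowSet, Finset.mem_biUnion, Finset.mem_range, mem_block]
  constructor
  · rintro ⟨k, hk, rfl⟩; exact hk
  · intro h; exact ⟨_, h, rfl⟩

/-- Block diagonal inverse matrix entries. -/
noncomputable def blockInv (D : ℕ) (H : (Fin D → ℕ) → (Fin D → ℕ) → ℝ) (k : ℕ)
    (a b : Fin D → ℕ) : ℝ :=
  if h : a ∈ Finset.Nat.antidiagonalTuple D k ∧ b ∈ Finset.Nat.antidiagonalTuple D k
  then (Hblock D k H)⁻¹ ⟨a, h.1⟩ ⟨b, h.2⟩ else 0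

lemma blockInv_eq_zero_left {D : ℕ} {H : (Fin D → ℕ) → (Fin D → ℕ) → ℝ} {k : ℕ}
    {a : Fin D → ℕ} (ha : a ∉ Finset.Nat.antidiagonalTuple D k) (b : Fin D → ℕ) :
    blockInv D H k a b = 0 := by
  rw [blockInv, dif_neg]; exact fun h => ha h.1

lemma blockInv_eq_zero_right {D : ℕ} {H : (Fin D → ℕ) → (Fin D → ℕ) → ℝ} {k : ℕ}
    (a : Fin D → ℕ) {b : Fin D → ℕ} (hb : b ∉ Finset.Nat.antidiagonalTuple D k) :
    blockInv D H k a b = 0 := by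
  rw [blockInv, dif_neg]; exact fun h => hb h.2

lemma blockInv_apply {D : ℕ} {H : (Fin D → ℕ) → (Fin D → ℕ) → ℝ} {k : ℕ}
    (a b : Finset.Nat.antidiagonalTuple D k) :
    blockInv D H k a.1 b.1 = (Hblock D k H)⁻¹ a b := by
  rw [blockInv, dif_pos ⟨a.2, b.2⟩]

lemma sum_below_of_support {D ℓ k : ℕ} (hk : k < ℓ) (f : (Fin D → ℕ) → ℝ)
    (hf : ∀ a, a ∉ Finset.Nat.antidiagonalTuple D k → f a = 0) :
    ∑ i : belowSet D ℓ, f i.1 = ∑ i : Finset.Nat.antidiagonalTuple D k, f i.1 := by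
  rw [Finset.sum_coe_sort, Finset.sum_coe_sort]
  refine (Finset.sum_subset (fun a ha => mem_belowSet.mpr ?_) fun a _ ha => hf a ha).symm
  rw [mem_block.mp ha]; exact hk

lemma mvP_eq_sum {D ℓ : ℕ} {S : (Fin D → ℕ) → (Fin D → ℕ) → ℝ}
    (hS1 : ∀ α β, deg α < deg β → S α β = 0)
    {α : Fin D → ℕ} (hα : deg α < ℓ) (x : Fin D → ℝ) :
    mvP S α x = ∑ β : belowSet D ℓ, S α β.1 * ∏ a, x a ^ β.1 a := by
  rw [Finset.sum_coe_sort (belowSet D ℓ) (fun β => S α β * ∏ a, x a ^ β a)]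
  apply finsum_eq_finset_sum_of_support_subset
  intro β hβ
  by_contra hmem
  have h1 : ℓ ≤ deg β := not_lt.mp fun h => hmem (Finset.mem_coe.mpr (mem_belowSet.mpr h))
  have : S α β = 0 := hS1 _ _ (lt_of_lt_of_le hα h1)
  simp [Function.mem_support, this] at hβ

lemma quad_sum {n : Type*} [Fintype n] (M : Matrix n n ℝ) (u v : n → ℝ) :
    ∑ i, ∑ j, u i * M i j * v j = dotProduct u (M.mulVec v) := by
  simp [dotProduct, Matrix.mulVec, Finset.mul_sum, mul_assoc]

/-- The Christoffel–Darboux kernel admits the two equivalent expressions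
`K^{(ℓ)}(x,y) = (χ^{[ℓ]}(x))ᵀ (G^{[ℓ]})⁻¹ χ^{[ℓ]}(y)
             = Σ_{k<ℓ} P_{[k]}(x)ᵀ (H_{[k]})⁻¹ P_{[k]}(y)`. -/
theorem christoffel_darboux_kernel_two_expressions
    (D : ℕ) (μ : Measure (Fin D → ℝ))
    (hint : ∀ α : Fin D → ℕ, Integrable (fun x => ∏ a, x a ^ α a) μ)
    (S H : (Fin D → ℕ) → (Fin D → ℕ) → ℝ)
    (hS1 : ∀ α β, deg α < deg β → S α β = 0)
    (hS2 : ∀ α β, deg α = deg β → S α β = if α = β then 1 else 0)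
    (hH : ∀ α β, deg α ≠ deg β → H α β = 0)
    (hfact : ∀ α β,
      (∑ᶠ γ, ∑ᶠ δ, S α γ * momG D μ γ δ * S β δ) = H α β)
    (ℓ : ℕ) (hdet : IsUnit (momGTrunc D ℓ μ).det)
    (hHdet : ∀ k, k < ℓ → IsUnit (Hblock D k H).det) :
    ∀ x y : Fin D → ℝ,
      (∑ i : belowSet D ℓ, ∑ j : belowSet D ℓ,
          (∏ a, x a ^ (i.1 a)) * (momGTrunc D ℓ μ)⁻¹ i j * ∏ a, y a ^ (j.1 a)) =
        ∑ k ∈ Finset.range ℓ,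
          ∑ i : Finset.Nat.antidiagonalTuple D k,
            ∑ j : Finset.Nat.antidiagonalTuple D k,
              mvP S i.1 x * (Hblock D k H)⁻¹ i j * mvP S j.1 y := by
  classical
  set G := momGTrunc D ℓ μ with hG
  set Sm : Matrix (belowSet D ℓ) (belowSet D ℓ) ℝ :=
    Matrix.of fun i j => S i.1 j.1 with hSm
  set Hm : Matrix (belowSet D ℓ) (belowSet D ℓ) ℝ :=
    Matrix.of fun i j => H i.1 j.1 with hHm
  set Hinv : Matrix (belowSet D ℓ) (belowSet D ℓ) ℝ :=
    Matrix.of fun i j => blockInv D H (deg j.1) i.1 j.1 with hHinv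
  -- Claim A : Sm * G * Smᵀ = Hm
  have claimA : Sm * G * Sm.transpose = Hm := by
    ext i j
    have hiℓ : deg i.1 < ℓ := mem_belowSet.mp i.2
    have hjℓ : deg j.1 < ℓ := mem_belowSet.mp j.2
    have inner : ∀ γ, (∑ᶠ δ, S i.1 γ * momG D μ γ δ * S j.1 δ)
        = ∑ δ ∈ belowSet D ℓ, S i.1 γ * momG D μ γ δ * S j.1 δ := by
      intro γ
      apply finsum_eq_finset_sum_of_support_subset
      intro δ hδ
      by_contra hmem
      have h1 : ℓ ≤ deg δ := not_lt.mp fun h => hmem (Finset.mem_coe.mpr (mem_belowSet.mpr h))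
      have : S j.1 δ = 0 := hS1 _ _ (lt_of_lt_of_le hjℓ h1)
      simp [Function.mem_support, this] at hδ
    have outer : H i.1 j.1
        = ∑ γ ∈ belowSet D ℓ, ∑ δ ∈ belowSet D ℓ, S i.1 γ * momG D μ γ δ * S j.1 δ := by
      rw [← hfact i.1 j.1, finsum_congr inner]
      apply finsum_eq_finset_sum_of_support_subset
      intro γ hγ
      by_contra hmem
      have h1 : ℓ ≤ deg γ := not_lt.mp fun h => hmem (Finset.mem_coe.mpr (mem_belowSet.mpr h))
      have hz : S i.1 γ = 0 := hS1 _ _ (lt_of_lt_of_le hiℓ h1)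
      simp [Function.mem_support, hz] at hγ
    show (Sm * G * Sm.transpose) i j = Hm i j
    have : Hm i j = ∑ γ : belowSet D ℓ, ∑ δ : belowSet D ℓ,
        S i.1 γ.1 * momG D μ γ.1 δ.1 * S j.1 δ.1 := by
      rw [Finset.sum_coe_sort (belowSet D ℓ)
        (f := fun γ => ∑ δ : belowSet D ℓ, S i.1 γ * momG D μ γ δ.1 * S j.1 δ.1)]
      rw [show Hm i j = H i.1 j.1 from rfl, outer]
      exact Finset.sum_congr rfl fun γ _ =>
        (Finset.sum_coe_sort (belowSet D ℓ) (fun δ => S i.1 γ * momG D μ γ δ * S j.1 δ)).symm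
    rw [this]
    simp only [Matrix.mul_apply, Matrix.transpose_apply, hSm, hG, momGTrunc, Matrix.of_apply,
      Finset.sum_mul]
    rw [Finset.sum_comm]
  -- Hm * Hinv = 1
  have HmHinv : Hm * Hinv = 1 := by
    ext i j
    have hjℓ : deg j.1 < ℓ := mem_belowSet.mp j.2
    have hjk : j.1 ∈ Finset.Nat.antidiagonalTuple D (deg j.1) := mem_block.mpr rfl
    rw [Matrix.mul_apply]
    by_cases hij : deg i.1 = deg j.1
    · have hik : i.1 ∈ Finset.Nat.antidiagonalTuple D (deg j.1) := mem_block.mpr hij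
      have key : ∑ γ : belowSet D ℓ, H i.1 γ.1 * blockInv D H (deg j.1) γ.1 j.1
          = ∑ γ : Finset.Nat.antidiagonalTuple D (deg j.1),
              H i.1 γ.1 * blockInv D H (deg j.1) γ.1 j.1 :=
        sum_below_of_support hjℓ (fun a => H i.1 a * blockInv D H (deg j.1) a j.1)
          (fun a ha => by simp [blockInv_eq_zero_left ha])
      have step : ∑ γ : belowSet D ℓ, Hm i γ * Hinv γ j
          = (Hblock D (deg j.1) H * (Hblock D (deg j.1) H)⁻¹) ⟨i.1, hik⟩ ⟨j.1, hjk⟩ := by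
        rw [Matrix.mul_apply]
        rw [show (∑ γ : belowSet D ℓ, Hm i γ * Hinv γ j)
            = ∑ γ : belowSet D ℓ, H i.1 γ.1 * blockInv D H (deg j.1) γ.1 j.1 from rfl, key]
        refine Finset.sum_congr rfl fun γ _ => ?_
        rw [show (⟨j.1, hjk⟩ : Finset.Nat.antidiagonalTuple D (deg j.1)) =
          (⟨j.1, hjk⟩ : Finset.Nat.antidiagonalTuple D (deg j.1)) from rfl]
        rw [← blockInv_apply γ ⟨j.1, hjk⟩]
        rfl
      rw [step, Matrix.mul_nonsing_inv _ (hHdet _ hjℓ)]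
      by_cases h : i = j
      · subst h; simp [Matrix.one_apply]
      · have : (⟨i.1, hik⟩ : Finset.Nat.antidiagonalTuple D (deg j.1)) ≠ ⟨j.1, hjk⟩ := by
          intro he; rw [Subtype.ext_iff] at he; exact h (Subtype.ext he)
        simp [Matrix.one_apply, this, h]
    · have hne : i ≠ j := fun h => hij (by rw [h])
      rw [Matrix.one_apply_ne hne]
      apply Finset.sum_eq_zero
      intro γ _
      by_cases hγ : γ.1 ∈ Finset.Nat.antidiagonalTuple D (deg j.1)
      · have : H i.1 γ.1 = 0 := hH _ _ (by rw [mem_block.mp hγ]; exact hij)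
        rw [show Hm i γ * Hinv γ j = H i.1 γ.1 * blockInv D H (deg j.1) γ.1 j.1 from rfl,
          this, zero_mul]
      · rw [show Hm i γ * Hinv γ j = H i.1 γ.1 * blockInv D H (deg j.1) γ.1 j.1 from rfl,
          blockInv_eq_zero_left hγ, mul_zero]
  -- G⁻¹ = Smᵀ * Hinv * Sm
  have h1 : Sm * (G * Sm.transpose * Hinv) = 1 := by
    rw [← Matrix.mul_assoc, ← Matrix.mul_assoc, claimA, HmHinv]
  have h2 : (G * Sm.transpose * Hinv) * Sm = 1 := mul_eq_one_comm.mp h1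
  have hGA : G * (Sm.transpose * Hinv * Sm) = 1 := by
    rw [← Matrix.mul_assoc, ← Matrix.mul_assoc]; exact h2
  have hGinv : G⁻¹ = Sm.transpose * Hinv * Sm := Matrix.inv_eq_right_inv hGA
  intro x y
  set χx : belowSet D ℓ → ℝ := fun i => ∏ a, x a ^ i.1 a with hχx
  set χy : belowSet D ℓ → ℝ := fun i => ∏ a, y a ^ i.1 a with hχy
  have lhs_eq : (∑ i : belowSet D ℓ, ∑ j : belowSet D ℓ,
        (∏ a, x a ^ (i.1 a)) * (momGTrunc D ℓ μ)⁻¹ i j * ∏ a, y a ^ (j.1 a))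
      = ∑ γ : belowSet D ℓ, ∑ δ : belowSet D ℓ,
          (Sm.mulVec χx) γ * Hinv γ δ * (Sm.mulVec χy) δ := by
    rw [quad_sum, quad_sum, ← hG, hGinv]
    rw [← Matrix.mulVec_mulVec, ← Matrix.mulVec_mulVec]
    rw [Matrix.dotProduct_mulVec χx Sm.transpose, Matrix.vecMul_transpose]
  rw [lhs_eq]
  have hPx : ∀ γ : belowSet D ℓ, (Sm.mulVec χx) γ = mvP S γ.1 x := by
    intro γ
    rw [mvP_eq_sum hS1 (mem_belowSet.mp γ.2) x]
    rfl
  have hPy : ∀ γ : belowSet D ℓ, (Sm.mulVec χy) γ = mvP S γ.1 y := by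
    intro γ
    rw [mvP_eq_sum hS1 (mem_belowSet.mp γ.2) y]
    rfl
  -- expand Hinv as a sum over k
  have hHinv_sum : ∀ γ δ : belowSet D ℓ,
      Hinv γ δ = ∑ k ∈ Finset.range ℓ, blockInv D H k γ.1 δ.1 := by
    intro γ δ
    have hδℓ : deg δ.1 < ℓ := mem_belowSet.mp δ.2
    rw [show Hinv γ δ = blockInv D H (deg δ.1) γ.1 δ.1 from rfl]
    refine (Finset.sum_eq_single (f := fun k => blockInv D H k γ.1 δ.1) (deg δ.1)
      (fun k _ hk => ?_) (fun h => absurd (Finset.mem_range.mpr hδℓ) h)).symm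
    exact blockInv_eq_zero_right _ fun h => hk (mem_block.mp h).symm
  calc ∑ γ : belowSet D ℓ, ∑ δ : belowSet D ℓ,
        (Sm.mulVec χx) γ * Hinv γ δ * (Sm.mulVec χy) δ
      = ∑ γ : belowSet D ℓ, ∑ δ : belowSet D ℓ, ∑ k ∈ Finset.range ℓ,
          mvP S γ.1 x * blockInv D H k γ.1 δ.1 * mvP S δ.1 y := by
        refine Finset.sum_congr rfl fun γ _ => Finset.sum_congr rfl fun δ _ => ?_
        rw [hPx, hPy, hHinv_sum, Finset.mul_sum, Finset.sum_mul]
    _ = ∑ k ∈ Finset.range ℓ, ∑ γ : belowSet D ℓ, ∑ δ : belowSet D ℓ,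
          mvP S γ.1 x * blockInv D H k γ.1 δ.1 * mvP S δ.1 y := by
        refine Eq.trans (Finset.sum_congr rfl fun γ _ => Finset.sum_comm) Finset.sum_comm
    _ = ∑ k ∈ Finset.range ℓ,
          ∑ i : Finset.Nat.antidiagonalTuple D k,
            ∑ j : Finset.Nat.antidiagonalTuple D k,
              mvP S i.1 x * (Hblock D k H)⁻¹ i j * mvP S j.1 y := by
        refine Finset.sum_congr rfl fun k hk => ?_
        have hkℓ : k < ℓ := Finset.mem_range.mp hk
        rw [sum_below_of_support hkℓ
          (fun a => ∑ δ : belowSet D ℓ, mvP S a x * blockInv D H k a δ.1 * mvP S δ.1 y)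
          (fun a ha => Finset.sum_eq_zero fun δ _ => by
            simp [blockInv_eq_zero_left ha])]
        refine Finset.sum_congr rfl fun γ _ => ?_
        rw [sum_below_of_support hkℓ
          (fun b => mvP S γ.1 x * blockInv D H k γ.1 b * mvP S b y)
          (fun b hb => by simp [blockInv_eq_zero_right _ hb])]
        refine Finset.sum_congr rfl fun δ _ => ?_
        rw [blockInv_apply]

end MVOPR14
end

section
/- If a Borel measure μ on ℝ^D is invariant under a linear isometry R ∈ O(D), i.e. μ(R⁻¹A) = μ(A) for all measurable A, then its moment matrix satisfies η_R G η_Rᵀ = G, the Cholesky factors satisfy η_R S η_R⁻¹ = S and η_R H η_Rᵀ = H, and consequently the multivariate orthogonal polynomials satisfy P(Rx) = η_R P(x) and the Christoffel–Darboux kernel is invariant: K^{(ℓ)}(Rx, Ry) = K^{(ℓ)}(x, y). -/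
open MeasureTheory Matrix

namespace MVOPR19

/-- Total degree of a multi-index. -/
def deg {D : ℕ} (α : Fin D → ℕ) : ℕ := ∑ a, α a

/-- The (finite) set of multi-indices of total degree `< ℓ`. -/
def belowSet (D ℓ : ℕ) : Finset (Fin D → ℕ) :=
  (Finset.range ℓ).biUnion fun k => Finset.Nat.antidiagonalTuple D k

/-- The moment matrix `G_{α,β} = ∫ x^{α+β} dμ` of a measure on `ℝ^D`. -/
noncomputable def momG (D : ℕ) (μ : Measure (Fin D → ℝ)) :
    (Fin D → ℕ) → (Fin D → ℕ) → ℝ :=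
  fun α β => ∫ x, ∏ a, x a ^ (α a + β a) ∂μ

/-- The truncated moment matrix `G^{[ℓ]}`, on multi-indices of degree `< ℓ`. -/
noncomputable def momGTrunc (D ℓ : ℕ) (μ : Measure (Fin D → ℝ)) :
    Matrix (belowSet D ℓ) (belowSet D ℓ) ℝ :=
  Matrix.of fun i j => momG D μ i.1 j.1

/-- The `k`-th diagonal block `H_{[k]}` of the block diagonal matrix `H`. -/
def Hblock (D k : ℕ) (H : (Fin D → ℕ) → (Fin D → ℕ) → ℝ) :
    Matrix (Finset.Nat.antidiagonalTuple D k) (Finset.Nat.antidiagonalTuple D k) ℝ :=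
  Matrix.of fun i j => H i.1 j.1

/-- The orthogonal polynomials `P_α(x) = Σ_β S_{α,β} x^β`. -/
noncomputable def mvP {D : ℕ} (S : (Fin D → ℕ) → (Fin D → ℕ) → ℝ)
    (α : Fin D → ℕ) (x : Fin D → ℝ) : ℝ :=
  ∑ᶠ β, S α β * ∏ a, x a ^ β a

/-- The Christoffel–Darboux kernel
`K^{(ℓ)}(x,y) = Σ_{k<ℓ} P_{[k]}(x)ᵀ H_{[k]}⁻¹ P_{[k]}(y)`. -/
noncomputable def CDker (D ℓ : ℕ) (S H : (Fin D → ℕ) → (Fin D → ℕ) → ℝ)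
    (x y : Fin D → ℝ) : ℝ :=
  ∑ k ∈ Finset.range ℓ,
    ∑ i : Finset.Nat.antidiagonalTuple D k,
      ∑ j : Finset.Nat.antidiagonalTuple D k,
        mvP S i.1 x * (Hblock D k H)⁻¹ i j * mvP S j.1 y

/-!
The rows of `S` define polynomials `P_α = x^α + (terms of degree < deg α)`, and `S G Sᵀ = H` says
that `P_α` is `μ`-orthogonal to every `P_β` of lower degree, hence to every polynomial of degree
`< deg α`. Since the truncated moment matrices are invertible, the only polynomial of degree `< n`
orthogonal to all polynomials of degree `< n` is `0`.

Composition with the invertible `R` maps the finite-dimensional space of polynomials of degree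
`< n` injectively, hence onto, itself. With the invariance of `μ` this makes
`x ↦ P_α(Rx) - Σ_β η_{αβ} P_β(x)` orthogonal to all polynomials of degree `< deg α`; it also has
degree `< deg α`, because both terms have leading part `(Rx)^α = Σ_β η_{αβ} x^β`. So it vanishes:
`P(Rx) = η P(x)`. Comparing monomial coefficients gives `η S = S η`. A family `f` with
`f(Rx) = η f(x)` has Gram matrix satisfying `η Gram(f) ηᵀ = Gram(f)`; for the monomials this is
`η G ηᵀ = G`, for `P` it is `η H ηᵀ = H`, and blockwise the latter makes the
Christoffel–Darboux kernel invariant.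
-/

section Monomials

variable {D : ℕ}

def monomialFun (β : Fin D → ℕ) (x : Fin D → ℝ) : ℝ := ∏ a, x a ^ β a

theorem monomialFun_add (α β : Fin D → ℕ) (x : Fin D → ℝ) :
    monomialFun (α + β) x = monomialFun α x * monomialFun β x := by
  simp only [monomialFun, Pi.add_apply, pow_add, Finset.prod_mul_distrib]

theorem mem_belowSet {n : ℕ} {β : Fin D → ℕ} : β ∈ belowSet D n ↔ deg β < n := by
  simp [belowSet, deg, Finset.Nat.mem_antidiagonalTuple]

theorem mem_antidiagonalTuple_iff_deg {k : ℕ} {β : Fin D → ℕ} :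
    β ∈ Finset.Nat.antidiagonalTuple D k ↔ deg β = k :=
  Finset.Nat.mem_antidiagonalTuple

theorem belowSet_succ (n : ℕ) :
    belowSet D (n + 1) = belowSet D n ∪ Finset.Nat.antidiagonalTuple D n := by
  simp only [belowSet, Finset.range_add_one, Finset.biUnion_insert, Finset.union_comm]

theorem finsum_eq_sum_belowSet {M : Type*} [AddCommMonoid M] {n : ℕ}
    {f : (Fin D → ℕ) → M} (hf : ∀ β, n ≤ deg β → f β = 0) :
    ∑ᶠ β, f β = ∑ β ∈ belowSet D n, f β :=
  finsum_eq_sum_of_support_subset f fun β hβ =>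
    mem_belowSet.2 (lt_of_not_ge fun h => hβ (hf β h))

theorem finsum_eq_sum_antidiagonalTuple {M : Type*} [AddCommMonoid M] {k : ℕ}
    {f : (Fin D → ℕ) → M} (hf : ∀ β, deg β ≠ k → f β = 0) :
    ∑ᶠ β, f β = ∑ β ∈ Finset.Nat.antidiagonalTuple D k, f β :=
  finsum_eq_sum_of_support_subset f fun β hβ =>
    mem_antidiagonalTuple_iff_deg.2 (by_contra fun h => hβ (hf β h))

theorem linearIndependent_monomialFun : LinearIndependent ℝ (monomialFun (D := D)) := by
  let ev : MvPolynomial (Fin D) ℝ →ₗ[ℝ] (Fin D → ℝ) → ℝ :=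
    { toFun := fun p x => MvPolynomial.eval x p
      map_add' := fun p q => by ext; simp
      map_smul' := fun c p => by ext; simp }
  have hev : ev.ker = ⊥ :=
    LinearMap.ker_eq_bot.2 fun p q h => MvPolynomial.funext fun x => congrFun h x
  have hmon := ((MvPolynomial.basisMonomials (Fin D) ℝ).linearIndependent.map' ev hev).comp
    Finsupp.equivFunOnFinite.symm (Equiv.injective _)
  have hfun : (ev ∘ MvPolynomial.basisMonomials (Fin D) ℝ) ∘ Finsupp.equivFunOnFinite.symm =
      monomialFun := by
    ext β x
    simp [ev, MvPolynomial.eval_monomial, Finsupp.prod_pow, monomialFun]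
  rwa [hfun] at hmon

theorem eq_of_finsum_mul_monomialFun_eq {c c' : (Fin D → ℕ) → ℝ} (hc : c.HasFiniteSupport)
    (hc' : c'.HasFiniteSupport)
    (h : ∀ x, ∑ᶠ β, c β * monomialFun β x = ∑ᶠ β, c' β * monomialFun β x) : c = c' := by
  have hcomb (e : (Fin D → ℕ) → ℝ) (he : e.HasFiniteSupport) :
      Finsupp.linearCombination ℝ monomialFun (Finsupp.ofSupportFinite e he) =
        fun x => ∑ᶠ β, e β * monomialFun β x := by
    ext x
    rw [Finsupp.linearCombination_apply, Finsupp.sum, Finset.sum_apply,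
      finsum_eq_sum_of_support_subset (fun β => e β * monomialFun β x)
        (s := (Finsupp.ofSupportFinite e he).support)
        fun β hβ => Finsupp.mem_support_iff.2 (left_ne_zero_of_mul hβ)]
    rfl
  exact congrArg (⇑) (linearIndependent_monomialFun
    ((hcomb c hc).trans ((funext h).trans (hcomb c' hc').symm)))

end Monomials

section RowFinite

variable {ι κ : Type*}

theorem finsum_mul_eq_sum_toFinset {u g : ι → ℝ} (hu : u.HasFiniteSupport) :
    ∑ᶠ i, u i * g i = ∑ i ∈ hu.toFinset, u i * g i :=
  finsum_eq_sum_of_support_subset _ fun _ hi =>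
    (Set.Finite.mem_toFinset hu).2 (left_ne_zero_of_mul hi)

theorem hasFiniteSupport_finsum_mul {u : ι → ℝ} {B : ι → κ → ℝ} (hu : u.HasFiniteSupport)
    (hB : ∀ i, (B i).HasFiniteSupport) : (fun k => ∑ᶠ i, u i * B i k).HasFiniteSupport := by
  refine (hu.biUnion fun i _ => hB i).subset fun k hk => ?_
  obtain ⟨i, hi⟩ : ∃ i, u i * B i k ≠ 0 := by
    by_contra! h
    exact hk (finsum_eq_zero_of_forall_eq_zero h)
  exact Set.mem_biUnion (left_ne_zero_of_mul hi) (right_ne_zero_of_mul hi)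

theorem finsum_mul_finsum_assoc {u : ι → ℝ} {B : ι → κ → ℝ} (hu : u.HasFiniteSupport)
    (hB : ∀ i, (B i).HasFiniteSupport) (f : κ → ℝ) :
    ∑ᶠ i, u i * ∑ᶠ k, B i k * f k = ∑ᶠ k, (∑ᶠ i, u i * B i k) * f k := by
  classical
  let t := hu.toFinset.biUnion fun i => (hB i).toFinset
  have ht : ∀ i ∈ hu.toFinset, ∀ k ∉ t, B i k = 0 := fun i hi k hk =>
    by_contra fun h => hk (Finset.mem_biUnion.2 ⟨i, hi, (Set.Finite.mem_toFinset _).2 h⟩)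
  have hrow (i) (hi : i ∈ hu.toFinset) : ∑ᶠ k, B i k * f k = ∑ k ∈ t, B i k * f k :=
    finsum_eq_sum_of_support_subset _ fun k hk => by_contra fun h' =>
      left_ne_zero_of_mul hk (ht i hi k h')
  have hcol : ∑ᶠ k, (∑ᶠ i, u i * B i k) * f k = ∑ k ∈ t, (∑ᶠ i, u i * B i k) * f k :=
    finsum_eq_sum_of_support_subset _ fun k hk => by_contra fun h' => left_ne_zero_of_mul hk <| by
      rw [finsum_mul_eq_sum_toFinset hu]
      exact Finset.sum_eq_zero fun i hi => by rw [ht i hi k h', mul_zero]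
  rw [hcol, finsum_mul_eq_sum_toFinset hu, Finset.sum_congr rfl fun i hi => by rw [hrow i hi]]
  simp only [finsum_mul_eq_sum_toFinset hu, Finset.mul_sum, Finset.sum_mul, mul_assoc]
  exact Finset.sum_comm

end RowFinite

section Gram

variable {X ι : Type*} [MeasurableSpace X]

noncomputable def gram (μ : Measure X) (f : ι → X → ℝ) (i j : ι) : ℝ := ∫ x, f i x * f j x ∂μ

theorem integral_comp_eq_of_map_eq {μ : Measure X} {φ : X → X} (hφ : Measurable φ)
    (hμ : μ.map φ = μ) {g : X → ℝ} (hg : AEStronglyMeasurable g μ) :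
    ∫ x, g (φ x) ∂μ = ∫ x, g x ∂μ := by
  rw [← integral_map hφ.aemeasurable (by rwa [hμ]), hμ]

theorem integral_finsum_mul_finsum {μ : Measure X} {f : ι → X → ℝ}
    (hf : ∀ i j, Integrable (fun x => f i x * f j x) μ) {u v : ι → ℝ}
    (hu : u.HasFiniteSupport) (hv : v.HasFiniteSupport) :
    ∫ x, (∑ᶠ i, u i * f i x) * (∑ᶠ j, v j * f j x) ∂μ =
      ∑ᶠ i, ∑ᶠ j, u i * gram μ f i j * v j := by
  have hrow (i) : ∑ᶠ j, u i * gram μ f i j * v j = u i * ∑ j ∈ hv.toFinset, v j * gram μ f i j := by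
    rw [← finsum_mul_eq_sum_toFinset hv, mul_finsum]
    exact finsum_congr fun j => by ring
  have hterm (i j) : Integrable (fun x => u i * f i x * (v j * f j x)) μ :=
    ((hf i j).const_mul (u i * v j)).congr (ae_of_all _ fun x => by ring)
  simp_rw [hrow, finsum_mul_eq_sum_toFinset hu, finsum_mul_eq_sum_toFinset hv,
    Finset.sum_mul_sum, Finset.mul_sum, gram]
  rw [integral_finsetSum _ fun i _ => integrable_finsetSum _ fun j _ => hterm i j]
  refine Finset.sum_congr rfl fun i _ => ?_
  rw [integral_finsetSum _ fun j _ => hterm i j]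
  refine Finset.sum_congr rfl fun j _ => ?_
  rw [← integral_const_mul, ← integral_const_mul]
  exact integral_congr_ae (ae_of_all _ fun x => by ring)

theorem finsum_mul_gram_mul_eq_gram {μ : Measure X} {φ : X → X} (hφ : Measurable φ)
    (hμ : μ.map φ = μ) {f : ι → X → ℝ} (hf : ∀ i j, Integrable (fun x => f i x * f j x) μ)
    {η : ι → ι → ℝ} (hη : ∀ i, (η i).HasFiniteSupport)
    (hfη : ∀ i x, f i (φ x) = ∑ᶠ j, η i j * f j x) (i j : ι) :
    ∑ᶠ k, ∑ᶠ l, η i k * gram μ f k l * η j l = gram μ f i j := by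
  rw [← integral_finsum_mul_finsum hf (hη i) (hη j)]
  simp_rw [← hfη]
  exact integral_comp_eq_of_map_eq hφ hμ (hf i j).aestronglyMeasurable

end Gram

section PolynomialFunctions

variable {D : ℕ}

def polyFun (D : ℕ) : Submodule ℝ ((Fin D → ℝ) → ℝ) :=
  Submodule.span ℝ (Set.range monomialFun)

def polyDegreeLT (D n : ℕ) : Submodule ℝ ((Fin D → ℝ) → ℝ) :=
  Submodule.span ℝ (Set.range fun β : belowSet D n => monomialFun β.1)

instance (n : ℕ) : FiniteDimensional ℝ (polyDegreeLT D n) :=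
  FiniteDimensional.span_of_finite ℝ (Set.finite_range _)

theorem monomialFun_mem_polyFun (β : Fin D → ℕ) : monomialFun β ∈ polyFun D :=
  Submodule.subset_span ⟨β, rfl⟩

theorem monomialFun_mem_polyDegreeLT {n : ℕ} {β : Fin D → ℕ} (h : deg β < n) :
    monomialFun β ∈ polyDegreeLT D n :=
  Submodule.subset_span ⟨⟨β, mem_belowSet.2 h⟩, rfl⟩

theorem polyDegreeLT_le_polyFun (n : ℕ) : polyDegreeLT D n ≤ polyFun D :=
  Submodule.span_mono (Set.range_subset_iff.2 fun β => ⟨β.1, rfl⟩)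

theorem mul_mem_polyFun {f g : (Fin D → ℝ) → ℝ} (hf : f ∈ polyFun D) (hg : g ∈ polyFun D) :
    f * g ∈ polyFun D := by
  have hfg : f * g ∈ polyFun D * polyFun D := Submodule.mul_mem_mul hf hg
  rw [polyFun, Submodule.span_mul_span] at hfg
  refine Submodule.span_le.2 ?_ hfg
  rintro _ ⟨_, ⟨α, rfl⟩, _, ⟨β, rfl⟩, rfl⟩
  exact Submodule.subset_span ⟨α + β, funext (monomialFun_add α β)⟩

theorem integrable_of_mem_polyFun {μ : Measure (Fin D → ℝ)}
    (hint : ∀ α, Integrable (monomialFun α) μ) {f : (Fin D → ℝ) → ℝ} (hf : f ∈ polyFun D) :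
    Integrable f μ := by
  induction hf using Submodule.span_induction with
  | mem _ h => obtain ⟨α, rfl⟩ := h; exact hint α
  | zero => exact integrable_zero _ _ _
  | add _ _ _ _ hf hg => exact hf.add hg
  | smul c _ _ hf => exact hf.smul c

theorem integrable_mul_of_mem_polyFun {μ : Measure (Fin D → ℝ)}
    (hint : ∀ α, Integrable (monomialFun α) μ) {f g : (Fin D → ℝ) → ℝ}
    (hf : f ∈ polyFun D) (hg : g ∈ polyFun D) : Integrable (fun x => f x * g x) μ :=
  integrable_of_mem_polyFun hint (mul_mem_polyFun hf hg)

theorem momG_eq_gram (μ : Measure (Fin D → ℝ)) : momG D μ = gram μ monomialFun := by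
  ext α β
  exact integral_congr_ae (ae_of_all _ (monomialFun_add α β))

theorem eq_zero_of_mem_polyDegreeLT {μ : Measure (Fin D → ℝ)}
    (hint : ∀ α, Integrable (monomialFun α) μ) {n : ℕ} (hG : IsUnit (momGTrunc D n μ).det)
    {d : (Fin D → ℝ) → ℝ} (hd : d ∈ polyDegreeLT D n)
    (horth : ∀ β, deg β < n → ∫ x, d x * monomialFun β x ∂μ = 0) : d = 0 := by
  obtain ⟨c, rfl⟩ := (Submodule.mem_span_range_iff_exists_fun ℝ).1 hd
  have hc : c ᵥ* momGTrunc D n μ = 0 := by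
    ext β
    rw [Pi.zero_apply, ← horth β.1 (mem_belowSet.1 β.2)]
    simp only [vecMul, dotProduct, momGTrunc, of_apply, momG_eq_gram, gram, Finset.sum_apply,
      Pi.smul_apply, smul_eq_mul, Finset.sum_mul, mul_assoc]
    rw [integral_finsetSum _ fun γ _ => (integrable_mul_of_mem_polyFun hint
      (monomialFun_mem_polyFun γ.1) (monomialFun_mem_polyFun β.1)).const_mul (c γ)]
    exact Finset.sum_congr rfl fun γ _ => (integral_const_mul _ _).symm
  obtain rfl : c = 0 := vecMul_injective_iff_isUnit.2 ((isUnit_iff_isUnit_det _).2 hG)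
    (hc.trans (zero_vecMul _).symm)
  simp

end PolynomialFunctions

section MonomialTransform

variable {D : ℕ}

structure IsMonomialTransform (R : Matrix (Fin D) (Fin D) ℝ)
    (η : (Fin D → ℕ) → (Fin D → ℕ) → ℝ) : Prop where
  block : ∀ α β, deg α ≠ deg β → η α β = 0
  monomialFun_mulVec : ∀ x α, monomialFun α (R *ᵥ x) = ∑ᶠ β, η α β * monomialFun β x

variable {R : Matrix (Fin D) (Fin D) ℝ} {η : (Fin D → ℕ) → (Fin D → ℕ) → ℝ}

theorem IsMonomialTransform.hasFiniteSupport (hη : IsMonomialTransform R η) (α : Fin D → ℕ) :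
    (η α).HasFiniteSupport :=
  (Finset.Nat.antidiagonalTuple D (deg α)).finite_toSet.subset fun β hβ =>
    mem_antidiagonalTuple_iff_deg.2 (by_contra fun h => hβ (hη.block α β (Ne.symm h)))

theorem IsMonomialTransform.finsum_mul_eq_sum (hη : IsMonomialTransform R η) (α : Fin D → ℕ)
    (g : (Fin D → ℕ) → ℝ) :
    ∑ᶠ β, η α β * g β = ∑ β ∈ Finset.Nat.antidiagonalTuple D (deg α), η α β * g β :=
  finsum_eq_sum_antidiagonalTuple fun β h => by rw [hη.block α β (Ne.symm h), zero_mul]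

theorem IsMonomialTransform.polyDegreeLT_le_comap (hη : IsMonomialTransform R η) (n : ℕ) :
    polyDegreeLT D n ≤ (polyDegreeLT D n).comap (LinearMap.funLeft ℝ ℝ (R *ᵥ ·)) := by
  refine Submodule.span_le.2 (Set.range_subset_iff.2 fun β => ?_)
  have hβ : (fun x => monomialFun β.1 (R *ᵥ x)) =
      ∑ γ ∈ Finset.Nat.antidiagonalTuple D (deg β.1), η β γ • monomialFun γ := by
    ext x
    simp [hη.monomialFun_mulVec, hη.finsum_mul_eq_sum]
  show (fun x => monomialFun β.1 (R *ᵥ x)) ∈ polyDegreeLT D n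
  rw [hβ]
  exact Submodule.sum_mem _ fun γ hγ => Submodule.smul_mem _ _ <| monomialFun_mem_polyDegreeLT <|
    (mem_antidiagonalTuple_iff_deg.1 hγ).trans_lt (mem_belowSet.1 β.2)

theorem IsMonomialTransform.polyFun_le_comap (hη : IsMonomialTransform R η) :
    polyFun D ≤ (polyFun D).comap (LinearMap.funLeft ℝ ℝ (R *ᵥ ·)) :=
  Submodule.span_le.2 <| Set.range_subset_iff.2 fun β => polyDegreeLT_le_polyFun _ <|
    hη.polyDegreeLT_le_comap _ (monomialFun_mem_polyDegreeLT (Nat.lt_succ_self (deg β)))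

theorem IsMonomialTransform.map_funLeft_polyDegreeLT (hη : IsMonomialTransform R η)
    (hR : Function.Surjective (R *ᵥ ·)) (n : ℕ) :
    (polyDegreeLT D n).map (LinearMap.funLeft ℝ ℝ (R *ᵥ ·)) = polyDegreeLT D n := by
  refine le_antisymm (Submodule.map_le_iff_le_comap.2 (hη.polyDegreeLT_le_comap n)) fun q hq => ?_
  let T := (LinearMap.funLeft ℝ ℝ (R *ᵥ ·)).restrict (p := polyDegreeLT D n)
    (q := polyDegreeLT D n) fun _ hp => hη.polyDegreeLT_le_comap n hp
  have hT : Function.Injective T := fun p p' h =>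
    Subtype.ext (LinearMap.funLeft_injective_of_surjective ℝ ℝ _ hR (congrArg Subtype.val h))
  obtain ⟨p, hp⟩ := LinearMap.injective_iff_surjective.1 hT ⟨q, hq⟩
  exact ⟨p, p.2, congrArg Subtype.val hp⟩

theorem IsMonomialTransform.Hblock_mulVec (hη : IsMonomialTransform R η) (k : ℕ)
    (f : (Fin D → ℕ) → ℝ) (i : Finset.Nat.antidiagonalTuple D k) :
    (Hblock D k η *ᵥ fun j => f j.1) i = ∑ᶠ β, η i.1 β * f β := by
  rw [hη.finsum_mul_eq_sum, mem_antidiagonalTuple_iff_deg.1 i.2,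
    ← Finset.sum_coe_sort (Finset.Nat.antidiagonalTuple D k)]
  rfl

theorem IsMonomialTransform.Hblock_mul_mul_transpose (hη : IsMonomialTransform R η) (k : ℕ)
    (F : (Fin D → ℕ) → (Fin D → ℕ) → ℝ) :
    Hblock D k η * Hblock D k F * (Hblock D k η)ᵀ =
      Hblock D k fun α β => ∑ᶠ γ, ∑ᶠ δ, η α γ * F γ δ * η β δ := by
  ext i j
  have hi := mem_antidiagonalTuple_iff_deg.1 i.2
  have hj := mem_antidiagonalTuple_iff_deg.1 j.2
  simp only [Hblock, mul_apply, of_apply, transpose_apply, Finset.sum_mul]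
  rw [Finset.sum_comm, finsum_eq_sum_antidiagonalTuple (k := k) fun γ hγ =>
      finsum_eq_zero_of_forall_eq_zero fun δ => by rw [hη.block i.1 γ (hi.trans_ne hγ.symm)]; ring,
    ← Finset.sum_coe_sort (Finset.Nat.antidiagonalTuple D k)]
  refine Finset.sum_congr rfl fun γ _ => ?_
  rw [finsum_eq_sum_antidiagonalTuple (k := k) fun δ hδ => by
      rw [hη.block j.1 δ (hj.trans_ne hδ.symm), mul_zero],
    ← Finset.sum_coe_sort (Finset.Nat.antidiagonalTuple D k)]

end MonomialTransform

section BlockCholesky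

variable {D : ℕ}

structure IsBlockCholesky (μ : Measure (Fin D → ℝ)) (S H : (Fin D → ℕ) → (Fin D → ℕ) → ℝ) :
    Prop where
  lower : ∀ α β, deg α < deg β → S α β = 0
  diag : ∀ α β, deg α = deg β → S α β = if α = β then 1 else 0
  blockDiag : ∀ α β, deg α ≠ deg β → H α β = 0
  factor : ∀ α β, (∑ᶠ γ, ∑ᶠ δ, S α γ * momG D μ γ δ * S β δ) = H α β

variable {μ : Measure (Fin D → ℝ)} {S H : (Fin D → ℕ) → (Fin D → ℕ) → ℝ}

theorem IsBlockCholesky.hasFiniteSupport (h : IsBlockCholesky μ S H) (α : Fin D → ℕ) :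
    (S α).HasFiniteSupport :=
  (belowSet D (deg α + 1)).finite_toSet.subset fun β hβ =>
    mem_belowSet.2 (by_contra fun h' => hβ (h.lower α β (by omega)))

theorem IsBlockCholesky.mvP_eq_sum (h : IsBlockCholesky μ S H) (α : Fin D → ℕ) :
    mvP S α = ∑ β ∈ belowSet D (deg α + 1), S α β • monomialFun β := by
  ext x
  simp only [Finset.sum_apply, Pi.smul_apply, smul_eq_mul]
  exact finsum_eq_sum_belowSet fun β hβ => by rw [h.lower α β (by omega), zero_mul]

theorem IsBlockCholesky.mvP_mem_polyFun (h : IsBlockCholesky μ S H) (α : Fin D → ℕ) :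
    mvP S α ∈ polyFun D := by
  rw [h.mvP_eq_sum]
  exact Submodule.sum_mem _ fun β _ => Submodule.smul_mem _ _ (monomialFun_mem_polyFun β)

theorem IsBlockCholesky.mvP_sub_monomialFun_mem (h : IsBlockCholesky μ S H) (α : Fin D → ℕ) :
    mvP S α - monomialFun α ∈ polyDegreeLT D (deg α) := by
  have hdiag : ∑ β ∈ Finset.Nat.antidiagonalTuple D (deg α), S α β • monomialFun β =
      monomialFun α := by
    rw [Finset.sum_eq_single_of_mem α (mem_antidiagonalTuple_iff_deg.2 rfl) fun β hβ hne => by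
        rw [h.diag α β (mem_antidiagonalTuple_iff_deg.1 hβ).symm, if_neg hne.symm, zero_smul],
      h.diag α α rfl, if_pos rfl, one_smul]
  have hdisj : Disjoint (belowSet D (deg α)) (Finset.Nat.antidiagonalTuple D (deg α)) :=
    Finset.disjoint_left.2 fun β h₁ h₂ =>
      (mem_belowSet.1 h₁).ne (mem_antidiagonalTuple_iff_deg.1 h₂)
  rw [h.mvP_eq_sum, belowSet_succ, Finset.sum_union hdisj, hdiag, add_sub_cancel_right]
  exact Submodule.sum_mem _ fun β hβ =>
    Submodule.smul_mem _ _ (monomialFun_mem_polyDegreeLT (mem_belowSet.1 hβ))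

theorem IsBlockCholesky.polyDegreeLT_le_span_mvP (h : IsBlockCholesky μ S H) (n : ℕ) :
    polyDegreeLT D n ≤ Submodule.span ℝ (Set.range fun β : belowSet D n => mvP S β.1) := by
  induction n with
  | zero =>
    exact Submodule.span_le.2 (Set.range_subset_iff.2 fun β =>
      absurd (mem_belowSet.1 β.2) (Nat.not_lt_zero _))
  | succ n ih =>
    have hle : Submodule.span ℝ (Set.range fun β : belowSet D n => mvP S β.1) ≤
        Submodule.span ℝ (Set.range fun β : belowSet D (n + 1) => mvP S β.1) :=
      Submodule.span_mono (Set.range_subset_iff.2 fun β =>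
        ⟨⟨β.1, mem_belowSet.2 ((mem_belowSet.1 β.2).trans (Nat.lt_succ_self n))⟩, rfl⟩)
    refine Submodule.span_le.2 (Set.range_subset_iff.2 fun β => ?_)
    rcases Nat.lt_succ_iff_lt_or_eq.1 (mem_belowSet.1 β.2) with hlt | heq
    · exact hle (ih (monomialFun_mem_polyDegreeLT hlt))
    · have hP : mvP S β.1 ∈ Submodule.span ℝ (Set.range fun β : belowSet D (n + 1) => mvP S β.1) :=
        Submodule.subset_span ⟨β, rfl⟩
      have hmono := sub_mem hP (hle (ih (heq ▸ h.mvP_sub_monomialFun_mem β.1)))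
      rwa [sub_sub_cancel] at hmono

theorem IsBlockCholesky.gram_mvP (h : IsBlockCholesky μ S H)
    (hint : ∀ α, Integrable (monomialFun α) μ) : gram μ (mvP S) = H := by
  ext α β
  rw [← h.factor α β, momG_eq_gram]
  exact integral_finsum_mul_finsum (fun γ δ => integrable_mul_of_mem_polyFun hint
    (monomialFun_mem_polyFun γ) (monomialFun_mem_polyFun δ))
    (h.hasFiniteSupport α) (h.hasFiniteSupport β)

theorem IsBlockCholesky.integral_mvP_mul_eq_zero (h : IsBlockCholesky μ S H)
    (hint : ∀ α, Integrable (monomialFun α) μ) {α : Fin D → ℕ} {q : (Fin D → ℝ) → ℝ}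
    (hq : q ∈ polyDegreeLT D (deg α)) : ∫ x, mvP S α x * q x ∂μ = 0 := by
  obtain ⟨c, rfl⟩ := (Submodule.mem_span_range_iff_exists_fun ℝ).1
    (h.polyDegreeLT_le_span_mvP _ hq)
  have hPP (β : belowSet D (deg α)) :
      Integrable (fun x => c β * (mvP S α x * mvP S β.1 x)) μ :=
    (integrable_mul_of_mem_polyFun hint (h.mvP_mem_polyFun α) (h.mvP_mem_polyFun β.1)).const_mul _
  simp only [Finset.sum_apply, Pi.smul_apply, smul_eq_mul, Finset.mul_sum, mul_left_comm _ (c _)]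
  rw [integral_finsetSum _ fun β _ => hPP β]
  refine Finset.sum_eq_zero fun β _ => ?_
  rw [integral_const_mul]
  change c β * gram μ (mvP S) α β.1 = 0
  rw [h.gram_mvP hint, h.blockDiag α β.1 (mem_belowSet.1 β.2).ne', mul_zero]

end BlockCholesky

section Matrix

variable {n : Type*} [Fintype n] [DecidableEq n] {E A : Matrix n n ℝ}

theorem isUnit_det_of_mul_mul_transpose_eq (hA : IsUnit A.det) (hE : E * A * Eᵀ = A) :
    IsUnit E.det := by
  have hdet := congrArg det hE
  rw [det_mul, det_mul, det_transpose] at hdet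
  exact IsUnit.of_mul_eq_one E.det (mul_right_cancel₀ hA.ne_zero (by linear_combination hdet))

theorem transpose_mul_inv_mul_eq_inv (hA : IsUnit A.det) (hE : E * A * Eᵀ = A) :
    Eᵀ * A⁻¹ * E = A⁻¹ := by
  have hEdet := isUnit_det_of_mul_mul_transpose_eq hA hE
  have hinv : A⁻¹ = Eᵀ⁻¹ * (A⁻¹ * E⁻¹) := by
    conv_lhs => rw [← hE]
    rw [Matrix.mul_inv_rev, Matrix.mul_inv_rev]
  calc Eᵀ * A⁻¹ * E = Eᵀ * (Eᵀ⁻¹ * (A⁻¹ * E⁻¹)) * E := by rw [← hinv]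
    _ = A⁻¹ := by
      rw [mul_nonsing_inv_cancel_left (A := Eᵀ) _ (by rwa [det_transpose]),
        nonsing_inv_mul_cancel_right (A := E) _ hEdet]

theorem sum_sum_mulVec_mul_inv_mul_mulVec (hA : IsUnit A.det) (hE : E * A * Eᵀ = A)
    (v w : n → ℝ) :
    ∑ i, ∑ j, (E *ᵥ v) i * A⁻¹ i j * (E *ᵥ w) j = ∑ i, ∑ j, v i * A⁻¹ i j * w j := by
  have hdot (v w : n → ℝ) : ∑ i, ∑ j, v i * A⁻¹ i j * w j = v ⬝ᵥ (A⁻¹ *ᵥ w) := by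
    simp only [dotProduct, mulVec, Finset.mul_sum, mul_assoc]
  rw [hdot, hdot, ← vecMul_transpose, ← dotProduct_mulVec, mulVec_mulVec, mulVec_mulVec,
    transpose_mul_inv_mul_eq_inv hA hE]

end Matrix

theorem measurable_mulVec {m n : Type*} [Fintype m] [Fintype n] (R : Matrix m n ℝ) :
    Measurable (R *ᵥ ·) :=
  (Continuous.matrix_mulVec continuous_const continuous_id).measurable

section Invariance

variable {D : ℕ} {R : Matrix (Fin D) (Fin D) ℝ} {μ : Measure (Fin D → ℝ)}
  {η S H : (Fin D → ℕ) → (Fin D → ℕ) → ℝ}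

theorem finsum_finsum_mul_momG_mul_eq (hinv : μ.map (R *ᵥ ·) = μ)
    (hint : ∀ α, Integrable (monomialFun α) μ) (hη : IsMonomialTransform R η)
    (α β : Fin D → ℕ) : ∑ᶠ γ, ∑ᶠ δ, η α γ * momG D μ γ δ * η β δ = momG D μ α β := by
  rw [momG_eq_gram]
  exact finsum_mul_gram_mul_eq_gram (measurable_mulVec R) hinv
    (fun γ δ => integrable_mul_of_mem_polyFun hint (monomialFun_mem_polyFun γ)
      (monomialFun_mem_polyFun δ))
    hη.hasFiniteSupport (fun γ x => hη.monomialFun_mulVec x γ) α β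

theorem IsBlockCholesky.comp_mulVec_mvP_sub_sum_mem (hSH : IsBlockCholesky μ S H)
    (hη : IsMonomialTransform R η) (α : Fin D → ℕ) :
    LinearMap.funLeft ℝ ℝ (R *ᵥ ·) (mvP S α) -
      ∑ β ∈ Finset.Nat.antidiagonalTuple D (deg α), η α β • mvP S β ∈ polyDegreeLT D (deg α) := by
  have hA : LinearMap.funLeft ℝ ℝ (R *ᵥ ·) (mvP S α - monomialFun α) ∈ polyDegreeLT D (deg α) :=
    hη.polyDegreeLT_le_comap _ (hSH.mvP_sub_monomialFun_mem α)
  have hB : ∑ β ∈ Finset.Nat.antidiagonalTuple D (deg α), η α β • (mvP S β - monomialFun β) ∈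
      polyDegreeLT D (deg α) :=
    Submodule.sum_mem _ fun β hβ => Submodule.smul_mem _ _ <|
      mem_antidiagonalTuple_iff_deg.1 hβ ▸ hSH.mvP_sub_monomialFun_mem β
  convert sub_mem hA hB using 1
  ext x
  simp only [LinearMap.funLeft_apply, map_sub, Pi.sub_apply, Finset.sum_apply, Pi.smul_apply,
    smul_eq_mul, mul_sub, Finset.sum_sub_distrib, hη.monomialFun_mulVec, hη.finsum_mul_eq_sum]
  ring

theorem IsBlockCholesky.integral_mvP_mulVec_mul_eq_zero (hSH : IsBlockCholesky μ S H)
    (hη : IsMonomialTransform R η) (hR : Function.Surjective (R *ᵥ ·))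
    (hinv : μ.map (R *ᵥ ·) = μ) (hint : ∀ α, Integrable (monomialFun α) μ) {α : Fin D → ℕ}
    {q : (Fin D → ℝ) → ℝ} (hq : q ∈ polyDegreeLT D (deg α)) :
    ∫ x, mvP S α (R *ᵥ x) * q x ∂μ = 0 := by
  rw [← hη.map_funLeft_polyDegreeLT hR] at hq
  obtain ⟨p, hp, rfl⟩ := hq
  exact (integral_comp_eq_of_map_eq (measurable_mulVec R) hinv
    (integrable_mul_of_mem_polyFun hint (hSH.mvP_mem_polyFun α)
      (polyDegreeLT_le_polyFun _ hp)).aestronglyMeasurable).trans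
    (hSH.integral_mvP_mul_eq_zero hint hp)

theorem IsBlockCholesky.comp_mulVec_mvP_eq_sum (hSH : IsBlockCholesky μ S H)
    (hη : IsMonomialTransform R η) (hR : Function.Surjective (R *ᵥ ·))
    (hinv : μ.map (R *ᵥ ·) = μ) (hint : ∀ α, Integrable (monomialFun α) μ) {α : Fin D → ℕ}
    (hG : IsUnit (momGTrunc D (deg α) μ).det) :
    LinearMap.funLeft ℝ ℝ (R *ᵥ ·) (mvP S α) =
      ∑ β ∈ Finset.Nat.antidiagonalTuple D (deg α), η α β • mvP S β := by
  refine sub_eq_zero.1 <| eq_zero_of_mem_polyDegreeLT hint hG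
    (hSH.comp_mulVec_mvP_sub_sum_mem hη α) fun γ hγ => ?_
  have hmul (f) (hf : f ∈ polyFun D) : Integrable (fun x => f x * monomialFun γ x) μ :=
    integrable_mul_of_mem_polyFun hint hf (monomialFun_mem_polyFun γ)
  have hRα : ∫ x, LinearMap.funLeft ℝ ℝ (R *ᵥ ·) (mvP S α) x * monomialFun γ x ∂μ = 0 :=
    hSH.integral_mvP_mulVec_mul_eq_zero hη hR hinv hint (monomialFun_mem_polyDegreeLT hγ)
  have hsum (β) (hβ : β ∈ Finset.Nat.antidiagonalTuple D (deg α)) :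
      ∫ x, η α β * (mvP S β x * monomialFun γ x) ∂μ = 0 := by
    rw [integral_const_mul, hSH.integral_mvP_mul_eq_zero hint
      (mem_antidiagonalTuple_iff_deg.1 hβ ▸ monomialFun_mem_polyDegreeLT hγ), mul_zero]
  simp only [Pi.sub_apply, sub_mul]
  rw [integral_sub (hmul _ (hη.polyFun_le_comap (hSH.mvP_mem_polyFun α)))
      (hmul _ (Submodule.sum_mem _ fun β _ => Submodule.smul_mem _ _ (hSH.mvP_mem_polyFun β))),
    hRα, zero_sub, neg_eq_zero]
  simp only [Finset.sum_apply, Pi.smul_apply, smul_eq_mul, Finset.sum_mul, mul_assoc]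
  rw [integral_finsetSum _ fun β _ => (hmul _ (hSH.mvP_mem_polyFun β)).const_mul _]
  exact Finset.sum_eq_zero hsum

theorem IsBlockCholesky.mvP_mulVec (hSH : IsBlockCholesky μ S H) (hη : IsMonomialTransform R η)
    (hR : Function.Surjective (R *ᵥ ·)) (hinv : μ.map (R *ᵥ ·) = μ)
    (hint : ∀ α, Integrable (monomialFun α) μ) (hG : ∀ n, IsUnit (momGTrunc D n μ).det)
    (α : Fin D → ℕ) (x : Fin D → ℝ) : mvP S α (R *ᵥ x) = ∑ᶠ β, η α β * mvP S β x := by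
  rw [hη.finsum_mul_eq_sum]
  simpa using congrFun (hSH.comp_mulVec_mvP_eq_sum hη hR hinv hint (hG (deg α))) x

theorem IsBlockCholesky.finsum_mul_comm (hSH : IsBlockCholesky μ S H)
    (hη : IsMonomialTransform R η) (hR : Function.Surjective (R *ᵥ ·))
    (hinv : μ.map (R *ᵥ ·) = μ) (hint : ∀ α, Integrable (monomialFun α) μ)
    (hG : ∀ n, IsUnit (momGTrunc D n μ).det) (α β : Fin D → ℕ) :
    ∑ᶠ γ, η α γ * S γ β = ∑ᶠ γ, S α γ * η γ β := by
  refine congrFun (eq_of_finsum_mul_monomialFun_eq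
    (hasFiniteSupport_finsum_mul (hη.hasFiniteSupport α) hSH.hasFiniteSupport)
    (hasFiniteSupport_finsum_mul (hSH.hasFiniteSupport α) hη.hasFiniteSupport) fun x => ?_) β
  rw [← finsum_mul_finsum_assoc (hη.hasFiniteSupport α) hSH.hasFiniteSupport,
    ← finsum_mul_finsum_assoc (hSH.hasFiniteSupport α) hη.hasFiniteSupport]
  simp_rw [← hη.monomialFun_mulVec]
  exact (hSH.mvP_mulVec hη hR hinv hint hG α x).symm

theorem IsBlockCholesky.finsum_finsum_mul_mul_eq (hSH : IsBlockCholesky μ S H)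
    (hη : IsMonomialTransform R η) (hR : Function.Surjective (R *ᵥ ·))
    (hinv : μ.map (R *ᵥ ·) = μ) (hint : ∀ α, Integrable (monomialFun α) μ)
    (hG : ∀ n, IsUnit (momGTrunc D n μ).det) (α β : Fin D → ℕ) :
    ∑ᶠ γ, ∑ᶠ δ, η α γ * H γ δ * η β δ = H α β := by
  rw [← hSH.gram_mvP hint]
  exact finsum_mul_gram_mul_eq_gram (measurable_mulVec R) hinv
    (fun γ δ => integrable_mul_of_mem_polyFun hint (hSH.mvP_mem_polyFun γ)
      (hSH.mvP_mem_polyFun δ))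
    hη.hasFiniteSupport (hSH.mvP_mulVec hη hR hinv hint hG) α β

theorem IsBlockCholesky.CDker_mulVec (hSH : IsBlockCholesky μ S H)
    (hη : IsMonomialTransform R η) (hR : Function.Surjective (R *ᵥ ·))
    (hinv : μ.map (R *ᵥ ·) = μ) (hint : ∀ α, Integrable (monomialFun α) μ)
    (hG : ∀ n, IsUnit (momGTrunc D n μ).det) (hHdet : ∀ k, IsUnit (Hblock D k H).det)
    (ℓ : ℕ) (x y : Fin D → ℝ) :
    CDker D ℓ S H (R *ᵥ x) (R *ᵥ y) = CDker D ℓ S H x y := by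
  refine Finset.sum_congr rfl fun k _ => ?_
  have hE : Hblock D k η * Hblock D k H * (Hblock D k η)ᵀ = Hblock D k H := by
    rw [hη.Hblock_mul_mul_transpose]
    simp only [hSH.finsum_finsum_mul_mul_eq hη hR hinv hint hG]
  have hP (z : Fin D → ℝ) (i : Finset.Nat.antidiagonalTuple D k) :
      mvP S i.1 (R *ᵥ z) = (Hblock D k η *ᵥ fun j => mvP S j.1 z) i :=
    (hSH.mvP_mulVec hη hR hinv hint hG i.1 z).trans (hη.Hblock_mulVec k (mvP S · z) i).symm
  simp only [hP]
  exact sum_sum_mulVec_mul_inv_mul_mulVec (hHdet k) hE _ _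

end Invariance

/-- If a Borel measure `μ` on `ℝ^D` is invariant under a linear isometry
`R ∈ O(D)` (i.e. `μ(R⁻¹A) = μ(A)`, that is `R_* μ = μ`), then its moment matrix
satisfies `η_R G η_Rᵀ = G`, the block Cholesky factors satisfy
`η_R S η_R⁻¹ = S` (equivalently `η_R S = S η_R`) and `η_R H η_Rᵀ = H`, the
multivariate orthogonal polynomials satisfy `P(Rx) = η_R P(x)`, and the
Christoffel–Darboux kernel is invariant: `K^{(ℓ)}(Rx, Ry) = K^{(ℓ)}(x, y)`.
Here `η_R` is the block diagonal (degree-preserving) matrix characterized by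
`χ(Rx) = η_R χ(x)`, and all semi-infinite matrix products are computed
entrywise via `finsum`. -/
theorem isometry_invariant_measure_mvopr
    (D : ℕ) (R : Matrix (Fin D) (Fin D) ℝ) (hR : Rᵀ * R = 1)
    (μ : Measure (Fin D → ℝ))
    (hinv : Measure.map (fun x => R.mulVec x) μ = μ)
    (hint : ∀ α : Fin D → ℕ, Integrable (fun x => ∏ a, x a ^ α a) μ)
    (η : (Fin D → ℕ) → (Fin D → ℕ) → ℝ)
    (hηblock : ∀ α β, deg α ≠ deg β → η α β = 0)
    (hηchar : ∀ (x : Fin D → ℝ) (α : Fin D → ℕ),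
      (∏ a, (R.mulVec x) a ^ α a) = ∑ᶠ β, η α β * ∏ a, x a ^ β a)
    (S H : (Fin D → ℕ) → (Fin D → ℕ) → ℝ)
    (hS1 : ∀ α β, deg α < deg β → S α β = 0)
    (hS2 : ∀ α β, deg α = deg β → S α β = if α = β then 1 else 0)
    (hH : ∀ α β, deg α ≠ deg β → H α β = 0)
    (hfact : ∀ α β,
      (∑ᶠ γ, ∑ᶠ δ, S α γ * momG D μ γ δ * S β δ) = H α β)
    (hdet : ∀ ℓ : ℕ, IsUnit (momGTrunc D ℓ μ).det)
    (hHdet : ∀ k : ℕ, IsUnit (Hblock D k H).det) :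
    (∀ α β, (∑ᶠ γ, ∑ᶠ δ, η α γ * momG D μ γ δ * η β δ) = momG D μ α β) ∧
    (∀ α β, (∑ᶠ γ, η α γ * S γ β) = ∑ᶠ γ, S α γ * η γ β) ∧
    (∀ α β, (∑ᶠ γ, ∑ᶠ δ, η α γ * H γ δ * η β δ) = H α β) ∧
    (∀ (α : Fin D → ℕ) (x : Fin D → ℝ),
      mvP S α (R.mulVec x) = ∑ᶠ β, η α β * mvP S β x) ∧
    (∀ (ℓ : ℕ) (x y : Fin D → ℝ),
      CDker D ℓ S H (R.mulVec x) (R.mulVec y) = CDker D ℓ S H x y) := by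
  have hRsurj : Function.Surjective (R *ᵥ ·) := fun y =>
    ⟨Rᵀ *ᵥ y, show R *ᵥ (Rᵀ *ᵥ y) = y by rw [mulVec_mulVec, mul_eq_one_comm.1 hR, one_mulVec]⟩
  have hη : IsMonomialTransform R η := ⟨hηblock, hηchar⟩
  have hSH : IsBlockCholesky μ S H := ⟨hS1, hS2, hH, hfact⟩
  exact ⟨finsum_finsum_mul_momG_mul_eq hinv hint hη,
    hSH.finsum_mul_comm hη hRsurj hinv hint hdet,
    hSH.finsum_finsum_mul_mul_eq hη hRsurj hinv hint hdet,
    hSH.mvP_mulVec hη hRsurj hinv hint hdet,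
    hSH.CDker_mulVec hη hRsurj hinv hint hdet hHdet⟩

end MVOPR19
end
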